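/- Let η₀ ∈ (0,1), F₀ ∈ (0, log((1+η₀)/(1−η₀))), d ∈ ℕ, let Q be a Borel probability measure on [0,1]^d, let η: [0,1]^d → [0,1] be Borel measurable, and set P = P_{η,Q}. Define ψ: [0,1]^d × {−1,1} → ℝ by ψ(x,y) = φ(y·F₀·sgn(2η(x)−1)) if |2η(x)−1| > η₀ and ψ(x,y) = φ(y·log(η(x)/(1−η(x)))) if |2η(x)−1| ≤ η₀, where sgn(t) = 1 if t ≥ 0 and sgn(t) = −1 otherwise (on the second region η(x) ∈ [(1−η₀)/2, (1+η₀)/2], so the logarithm is well defined). Then: (a) for every Borel measurable f: [0,1]^d → [−F₀, F₀], ∫ (φ(y·f(x)) − ψ(x,y))² dP(x,y) ≤ (8/(1−η₀²)) · ∫ (φ(y·f(x)) − ψ(x,y)) dP(x,y); and (b) 0 ≤ ψ(x,y) ≤ log(2/(1−η₀)) for all (x,y) ∈ [0,1]^d × {−1,1}. -/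

import Mathlib

open MeasureTheory
open scoped ENNReal NNReal

namespace DNNLogistic

noncomputable section

/-- The unit cube `[0,1]^d` as a subset of `ℝ^d`. -/
def cube (d : ℕ) : Set (Fin d → ℝ) := {x | ∀ i, x i ∈ Set.Icc (0 : ℝ) 1}

/-- The logistic loss `φ(t) = log (1 + e^{-t})`. -/
def logLoss (t : ℝ) : ℝ := Real.log (1 + Real.exp (-t))

/-- `sgn(t) = 1` if `t ≥ 0`, `sgn(t) = -1` otherwise. -/
def rsgn (t : ℝ) : ℝ := if 0 ≤ t then 1 else -1

/-- The Euclidean distance `‖x - z‖₂` on `ℝ^m`. -/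
def eucDist {m : ℕ} (x z : Fin m → ℝ) : ℝ := Real.sqrt (∑ i, (x i - z i) ^ 2)

/-- The logistic risk `R^φ_{η,Q}(f)` of `f` with respect to the conditional probability
function `η` and the marginal distribution `Q` on `[0,1]^d`. -/
def logRisk (d : ℕ) (Q : Measure (Fin d → ℝ)) (η f : (Fin d → ℝ) → ℝ) : ℝ :=
  ∫ x, (η x * logLoss (f x) + (1 - η x) * logLoss (-f x)) ∂Q

/-- The infimum of the logistic risk over all Borel measurable real-valued functions. -/
def infLogRisk (d : ℕ) (Q : Measure (Fin d → ℝ)) (η : (Fin d → ℝ) → ℝ) : ℝ :=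
  sInf {t | ∃ g : (Fin d → ℝ) → ℝ, Measurable g ∧ t = logRisk d Q η g}

/-- The excess logistic risk `E^φ_{η,Q}(f)`. -/
def excessLogRisk (d : ℕ) (Q : Measure (Fin d → ℝ)) (η f : (Fin d → ℝ) → ℝ) : ℝ :=
  logRisk d Q η f - infLogRisk d Q η

/-- The misclassification risk `R_{η,Q}(f)`; note `1{sgn(f x) = -1} = 1{f x < 0}` and
`1{sgn(f x) = 1} = 1{0 ≤ f x}`. -/
def misRisk (d : ℕ) (Q : Measure (Fin d → ℝ)) (η f : (Fin d → ℝ) → ℝ) : ℝ :=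
  ∫ x, (η x * (if f x < 0 then (1 : ℝ) else 0)
      + (1 - η x) * (if 0 ≤ f x then (1 : ℝ) else 0)) ∂Q

/-- The infimum of the misclassification risk over all Borel measurable functions. -/
def infMisRisk (d : ℕ) (Q : Measure (Fin d → ℝ)) (η : (Fin d → ℝ) → ℝ) : ℝ :=
  sInf {t | ∃ g : (Fin d → ℝ) → ℝ, Measurable g ∧ t = misRisk d Q η g}

/-- The excess misclassification error `E_{η,Q}(f)`. -/
def excessMisRisk (d : ℕ) (Q : Measure (Fin d → ℝ)) (η f : (Fin d → ℝ) → ℝ) : ℝ :=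
  misRisk d Q η f - infMisRisk d Q η

/-- The joint distribution `P_{η,Q}` on `ℝ^d × ℝ`: the marginal on the first factor is `Q`,
and the conditional distribution of the label given `x` puts mass `η x` on `1` and mass
`1 - η x` on `-1`.  It satisfies `P_{η,Q}(S) = ∫ (η x • 1_S(x,1) + (1 - η x) • 1_S(x,-1)) dQ`. -/
def PeQ (d : ℕ) (Q : Measure (Fin d → ℝ)) (η : (Fin d → ℝ) → ℝ) :
    Measure ((Fin d → ℝ) × ℝ) :=
  (Q.withDensity fun x => ENNReal.ofReal (η x)).map (fun x => (x, (1 : ℝ)))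
    + (Q.withDensity fun x => ENNReal.ofReal (1 - η x)).map (fun x => (x, (-1 : ℝ)))

/-- The logistic risk `R^φ_P(f)` with respect to a joint distribution `P` on
`[0,1]^d × {-1,1}`. -/
def jointLogRisk (d : ℕ) (P : Measure ((Fin d → ℝ) × ℝ)) (f : (Fin d → ℝ) → ℝ) : ℝ :=
  ∫ z, logLoss (z.2 * f z.1) ∂P

/-- The Lebesgue measure on the cube `[0,1]^d`. -/
def cubeVolume (d : ℕ) : Measure (Fin d → ℝ) := volume.restrict (cube d)

/-- The `n`-fold product measure `P^{⊗n}` on the sample space. -/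
def nSample (d n : ℕ) (P : Measure ((Fin d → ℝ) × ℝ)) :
    Measure (Fin n → (Fin d → ℝ) × ℝ) :=
  Measure.pi fun _ => P

/-- `fhat` is an empirical logistic-risk minimizer over the class `Fcls` from samples of
size `n`: it is jointly Borel measurable, and for every sample
`z ∈ ([0,1]^d × {-1,1})^n` the function `fhat z` belongs to `Fcls` and minimizes the
empirical logistic risk over `Fcls`. -/
def IsERM (d n : ℕ) (Fcls : Set ((Fin d → ℝ) → ℝ))
    (fhat : (Fin n → (Fin d → ℝ) × ℝ) → (Fin d → ℝ) → ℝ) : Prop :=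
  Measurable (fun p : (Fin n → (Fin d → ℝ) × ℝ) × (Fin d → ℝ) => fhat p.1 p.2) ∧
  ∀ z : Fin n → (Fin d → ℝ) × ℝ, (∀ i, z i ∈ (cube d) ×ˢ ({-1, 1} : Set ℝ)) →
    fhat z ∈ Fcls ∧
    ∀ f ∈ Fcls,
      ∑ i, logLoss ((z i).2 * fhat z ((z i).1)) ≤ ∑ i, logLoss ((z i).2 * f ((z i).1))

/-- The successive hidden layers of a fully connected ReLU network:
`u₀ = x` and `u_{k+1} = σ_{v_{k+1}}(W_k u_k)`. -/
def fnnHidden (m : ℕ → ℕ) (W : ∀ k : ℕ, Matrix (Fin (m (k + 1))) (Fin (m k)) ℝ)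
    (v : ∀ k : ℕ, Fin (m k) → ℝ) : (k : ℕ) → (Fin (m 0) → ℝ) → (Fin (m k) → ℝ)
  | 0 => fun x => x
  | (k + 1) => fun x j => max ((W k).mulVec (fnnHidden m W v k x) j - v (k + 1) j) 0

/-- `f ∈ F^FNN_d(G, N, S, B, F)`: `f : ℝ^d → ℝ` is realized by a fully connected ReLU
network `x ↦ W_L σ_{v_L} W_{L-1} ⋯ W_1 σ_{v_1} W_0 x` with depth `L ≤ G`, hidden widths
at most `N`, at most `S` nonzero entries among all weight matrices and bias vectors, all
entries bounded by `B` in absolute value, and `sup_{x ∈ [0,1]^d} |f x| ≤ F`. -/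
def IsFNN (d : ℕ) (G N S B : ℝ) (F : ℝ≥0∞) (f : (Fin d → ℝ) → ℝ) : Prop :=
  ∃ (L : ℕ) (m : ℕ → ℕ) (W : ∀ k : ℕ, Matrix (Fin (m (k + 1))) (Fin (m k)) ℝ)
    (v : ∀ k : ℕ, Fin (m k) → ℝ) (hm0 : m 0 = d) (hmL : m (L + 1) = 1),
    1 ≤ L ∧ (L : ℝ) ≤ G ∧
    (∀ k : ℕ, 1 ≤ k → k ≤ L → (m k : ℝ) ≤ N) ∧
    (((∑ k ∈ Finset.range (L + 1),
          Set.ncard {p : Fin (m (k + 1)) × Fin (m k) | W k p.1 p.2 ≠ 0}) +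
        (∑ k ∈ Finset.Icc 1 L, Set.ncard {j : Fin (m k) | v k j ≠ 0}) : ℝ) ≤ S) ∧
    (∀ k : ℕ, k ≤ L → ∀ i j, |W k i j| ≤ B) ∧
    (∀ k : ℕ, 1 ≤ k → k ≤ L → ∀ j, |v k j| ≤ B) ∧
    (∀ x ∈ cube d, ENNReal.ofReal |f x| ≤ F) ∧
    (∀ x : Fin d → ℝ,
      f x = (W L).mulVec (fnnHidden m W v L fun i => x (Fin.cast hm0 i)) (Fin.cast hmL.symm 0))

/-- The partial derivative (within the cube) of `f` in the `i`-th coordinate direction. -/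
def pderivW (m : ℕ) (i : Fin m) (f : (Fin m → ℝ) → ℝ) : (Fin m → ℝ) → ℝ :=
  fun x => fderivWithin ℝ f (cube m) x (Pi.single i 1)

/-- The iterated partial derivative of `f` along the list of coordinate directions `l`. -/
def derivListW (m : ℕ) : List (Fin m) → ((Fin m → ℝ) → ℝ) → ((Fin m → ℝ) → ℝ)
  | [], f => f
  | (i :: l), f => derivListW m l (pderivW m i f)

/-- Membership in the Hölder ball `B^β_r([0,1]^m)`: with `k = ⌈β⌉ - 1` and
`λ = β - ⌈β⌉ + 1`, `f` has continuous partial derivatives (within the cube) up to order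
`k`, and the maximum of the sup-norms of its derivatives of order at most `k` plus the
maximum of the Hölder-`λ` seminorms of its derivatives of order `k` is at most `r`. -/
def MemHolderBall (m : ℕ) (β r : ℝ) (f : (Fin m → ℝ) → ℝ) : Prop :=
  (∀ l : List (Fin m), l.length < ⌈β⌉₊ - 1 →
    DifferentiableOn ℝ (derivListW m l f) (cube m)) ∧
  (∀ l : List (Fin m), l.length ≤ ⌈β⌉₊ - 1 →
    ContinuousOn (derivListW m l f) (cube m)) ∧
  ∃ A Bc : ℝ, A + Bc ≤ r ∧
    (∀ l : List (Fin m), l.length ≤ ⌈β⌉₊ - 1 → ∀ x ∈ cube m, |derivListW m l f x| ≤ A) ∧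
    (∀ l : List (Fin m), l.length = ⌈β⌉₊ - 1 → ∀ x ∈ cube m, ∀ z ∈ cube m, x ≠ z →
      |derivListW m l f x - derivListW m l f z| ≤ Bc * eucDist x z ^ (β - (⌈β⌉₊ : ℝ) + 1))

/-- `f ∈ G^M_d(dmax)`: on `[0,1]^d`, `f` computes the maximum of at most `dmax` of its
input coordinates. -/
def GM (d dmax : ℕ) (f : (Fin d → ℝ) → ℝ) : Prop :=
  ∃ (I : Finset (Fin d)) (hI : I.Nonempty), I.card ≤ dmax ∧
    ∀ x ∈ cube d, f x = I.sup' hI fun i => x i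

/-- `f ∈ G^H_d(dstar, β, r)`: on `[0,1]^d`, `f` depends on exactly `dstar` of its input
coordinates, through a function in the Hölder ball `B^β_r([0,1]^{dstar})`. -/
def GH (d dstar : ℕ) (β r : ℝ) (f : (Fin d → ℝ) → ℝ) : Prop :=
  ∃ (I : Finset (Fin d)) (hI : I.card = dstar) (g : (Fin dstar → ℝ) → ℝ),
    MemHolderBall dstar β r g ∧
    ∀ x ∈ cube d, f x = g fun j => x ↑(I.orderIsoOfFin hI j)

/-- Iterated composition `h_{n-1} ∘ ⋯ ∘ h_1 ∘ h_0` of a chain of maps with varying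
dimensions `D : ℕ → ℕ`. -/
def depChain (D : ℕ → ℕ) (h : ∀ i : ℕ, (Fin (D i) → ℝ) → (Fin (D (i + 1)) → ℝ)) :
    (n : ℕ) → (Fin (D 0) → ℝ) → (Fin (D n) → ℝ)
  | 0 => fun x => x
  | (n + 1) => fun x => h n (depChain D h n x)

/-- `f ∈ G^CHOM_d(q, K, dmax, dstar, β, r)`: on `[0,1]^d`, `f` is a composition
`h_q ∘ ⋯ ∘ h_0` where `h_0 : [0,1]^d → [0,1]^K`, `h_i : [0,1]^K → [0,1]^K` for
`0 < i < q`, `h_q : [0,1]^{d or K} → ℝ`, and each coordinate function of each `h_i`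
belongs to `G^H(dstar, β, r) ∪ G^M(dmax)`. -/
def GCHOM (q d dmax dstar K : ℕ) (β r : ℝ) (f : (Fin d → ℝ) → ℝ) : Prop :=
  ∃ (D : ℕ → ℕ) (h : ∀ i : ℕ, (Fin (D i) → ℝ) → (Fin (D (i + 1)) → ℝ))
    (hD0 : D 0 = d) (hDq : D (q + 1) = 1),
    (∀ i : ℕ, 1 ≤ i → i ≤ q → D i = K) ∧
    (∀ i : ℕ, i ≤ q → ∀ j : Fin (D (i + 1)),
      GH (D i) dstar β r (fun x => h i x j) ∨ GM (D i) dmax (fun x => h i x j)) ∧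
    (∀ i : ℕ, i < q → ∀ x ∈ cube (D i), h i x ∈ cube (D (i + 1))) ∧
    (∀ x ∈ cube d,
      f x = depChain D h (q + 1) (fun i => x (Fin.cast hD0 i)) (Fin.cast hDq.symm 0))

/-- `f ∈ G^CH_d(q, K, dstar, β, r)`: as `G^CHOM`, but every coordinate function belongs
to `G^H(dstar, β, r)`. -/
def GCH (q d dstar K : ℕ) (β r : ℝ) (f : (Fin d → ℝ) → ℝ) : Prop :=
  ∃ (D : ℕ → ℕ) (h : ∀ i : ℕ, (Fin (D i) → ℝ) → (Fin (D (i + 1)) → ℝ))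
    (hD0 : D 0 = d) (hDq : D (q + 1) = 1),
    (∀ i : ℕ, 1 ≤ i → i ≤ q → D i = K) ∧
    (∀ i : ℕ, i ≤ q → ∀ j : Fin (D (i + 1)), GH (D i) dstar β r (fun x => h i x j)) ∧
    (∀ i : ℕ, i < q → ∀ x ∈ cube (D i), h i x ∈ cube (D (i + 1))) ∧
    (∀ x ∈ cube d,
      f x = depChain D h (q + 1) (fun i => x (Fin.cast hD0 i)) (Fin.cast hDq.symm 0))

/-- The sup-norm over the cube of the (componentwise) difference of two vector-valued
functions. -/
def supDiffVec (m k : ℕ) (g g' : (Fin m → ℝ) → (Fin k → ℝ)) : ℝ :=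
  sSup {t | ∃ x ∈ cube m, ∃ j : Fin k, t = |g x j - g' x j|}

/-- The binary entropy function `H`. -/
def entH (t : ℝ) : ℝ :=
  if t = 0 ∨ t = 1 then 0 else t * Real.log (1 / t) + (1 - t) * Real.log (1 / (1 - t))

/-- `sup { 1/(2(2 + e^t + e^{-t})) : min u v ≤ t ≤ max u v }`. -/
def wSup (u v : ℝ) : ℝ :=
  sSup {s | ∃ t ∈ Set.Icc (min u v) (max u v), s = 1 / (2 * (2 + Real.exp t + Real.exp (-t)))}

/-- The function `J` of Statement 19. -/
def Jfun (x y : ℝ) : ℝ :=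
  (x + y) * Real.log (2 / (x + y)) + (2 - x - y) * Real.log (2 / (2 - x - y))
    - (x * Real.log (1 / x) + (1 - x) * Real.log (1 / (1 - x))
        + y * Real.log (1 / y) + (1 - y) * Real.log (1 / (1 - y)))

/-- The grid `G_{Q,d}` of points of `[0,1]^d` whose coordinates are odd multiples of
`1/(2Q)`. -/
def oddGrid (d Qn : ℕ) : Set (Fin d → ℝ) :=
  {a | a ∈ cube d ∧ ∀ i, ∃ k : ℤ, Odd k ∧ a i = (k : ℝ) / (2 * (Qn : ℝ))}

/-!
Write `M = log ((1 + η₀) / (1 - η₀))`. The sigmoid `σ` maps `[-M, M]` onto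
`[(1 - η₀) / 2, (1 + η₀) / 2]`, where `σ' = σ (1 - σ) ≥ (1 - η₀²) / 4`. The conditional
risk `t ↦ e φ(t) + (1 - e) φ(-t)` has derivative `σ(t) - e`, so it is
`(1 - η₀²) / 4`-strongly convex on `[-M, M]`. The score `b` with `ψ(x, y) = φ(y b)` lies in
`[-M, M]`, and although it need not minimise the conditional risk, `σ(b) - e` has the sign
of `b - a` for every `a ∈ [-F₀, F₀]` (this is where `F₀ ≤ M` enters). Hence the excess
conditional risk of `a` over `b` is at least `(1 - η₀²) / 8 · (a - b)²`, while `φ` is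
1-Lipschitz, so the conditional second moment of the excess loss is at most `(a - b)²`.
-/

open Real Set

lemma logLoss_eq_neg_log_sigmoid (t : ℝ) : logLoss t = -log (sigmoid t) := by
  rw [logLoss, sigmoid_def, log_inv, neg_neg]

lemma hasDerivAt_logLoss (t : ℝ) : HasDerivAt logLoss (sigmoid t - 1) t := by
  rw [show logLoss = fun t => -log (sigmoid t) from funext logLoss_eq_neg_log_sigmoid]
  refine ((hasDerivAt_sigmoid t).log (sigmoid_pos t).ne').fun_neg.congr_deriv ?_
  field_simp [(sigmoid_pos t).ne']
  ring

lemma differentiable_logLoss : Differentiable ℝ logLoss :=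
  fun t => (hasDerivAt_logLoss t).differentiableAt

lemma measurable_logLoss : Measurable logLoss :=
  differentiable_logLoss.continuous.measurable

lemma logLoss_nonneg (t : ℝ) : 0 ≤ logLoss t :=
  log_nonneg (by linarith [exp_pos (-t)])

lemma logLoss_antitone : Antitone logLoss := fun s t hst => by
  unfold logLoss
  gcongr

lemma lipschitzWith_logLoss : LipschitzWith 1 logLoss := by
  refine lipschitzWith_of_nnnorm_deriv_le differentiable_logLoss fun t => ?_
  rw [(hasDerivAt_logLoss t).deriv, ← NNReal.coe_le_coe, coe_nnnorm, Real.norm_eq_abs,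
    NNReal.coe_one, abs_le]
  constructor <;> linarith [sigmoid_pos t, sigmoid_lt_one t]

lemma abs_logLoss_sub_le (a b : ℝ) : |logLoss a - logLoss b| ≤ |a - b| := by
  simpa [Real.dist_eq] using lipschitzWith_logLoss.dist_le_mul a b

lemma logLoss_neg_log {r : ℝ} (hr : 0 < r) : logLoss (-log r) = log (1 + r) := by
  rw [logLoss, neg_neg, exp_log hr]

lemma sigmoid_log {r : ℝ} (hr : 0 < r) : sigmoid (log r) = r / (1 + r) := by
  rw [sigmoid_def, exp_neg, exp_log hr]
  field_simp
  ring

lemma sigmoid_log_div_one_sub {e : ℝ} (he : e ∈ Ioo (0 : ℝ) 1) :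
    sigmoid (log (e / (1 - e))) = e := by
  have : 0 < 1 - e := by linarith [he.2]
  rw [sigmoid_log (div_pos he.1 this)]
  field_simp
  ring

lemma abs_le_log_div_iff {η : ℝ} (hη : η ∈ Ioo (-1 : ℝ) 1) (t : ℝ) :
    |t| ≤ log ((1 + η) / (1 - η)) ↔ |2 * sigmoid t - 1| ≤ η := by
  obtain ⟨h1, h2⟩ := hη
  have hr : 0 < (1 + η) / (1 - η) := div_pos (by linarith) (by linarith)
  have hupper : sigmoid (log ((1 + η) / (1 - η))) = (1 + η) / 2 := by
    rw [sigmoid_log hr]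
    field_simp
    ring
  have hlower : sigmoid (-log ((1 + η) / (1 - η))) = (1 - η) / 2 := by
    rw [sigmoid_neg, hupper]
    ring
  rw [abs_le, abs_le, ← sigmoid_le_iff, ← sigmoid_le_iff (a := t), hupper, hlower]
  constructor <;> rintro ⟨h, h'⟩ <;> constructor <;> linarith

lemma mul_sub_le_sigmoid_sub {η : ℝ} (hη : η ∈ Ioo (-1 : ℝ) 1) {s t : ℝ}
    (hs : |s| ≤ log ((1 + η) / (1 - η))) (ht : |t| ≤ log ((1 + η) / (1 - η)))
    (hst : s ≤ t) :
    (1 - η ^ 2) / 4 * (t - s) ≤ sigmoid t - sigmoid s := by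
  refine (convex_Icc _ _).mul_sub_le_image_sub_of_le_deriv continuous_sigmoid.continuousOn
    differentiable_sigmoid.differentiableOn (fun x hx => ?_) s (abs_le.1 hs) t (abs_le.1 ht) hst
  rw [interior_Icc] at hx
  have hσ := (abs_le.1 ((abs_le_log_div_iff hη x).1 (abs_le.2 ⟨hx.1.le, hx.2.le⟩)))
  rw [deriv_sigmoid]
  nlinarith [hσ.1, hσ.2]

lemma mul_sub_add_sq_le_sub_of_deriv_sub_ge {f f' : ℝ → ℝ} {p q c : ℝ}
    (hf : ∀ t, HasDerivAt f (f' t) t)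
    (hf' : ∀ s ∈ Icc p q, ∀ t ∈ Icc p q, s ≤ t → c * (t - s) ≤ f' t - f' s)
    {a b : ℝ} (ha : a ∈ Icc p q) (hb : b ∈ Icc p q) :
    f' b * (a - b) + c / 2 * (a - b) ^ 2 ≤ f a - f b := by
  set G := fun t => f t - f' b * t - c / 2 * (t - b) ^ 2
  have hG : ∀ t, HasDerivAt G (f' t - f' b - c * (t - b)) t := fun t => by
    refine (((hf t).fun_sub ((hasDerivAt_id t).const_mul (f' b))).fun_sub
      ((((hasDerivAt_id t).sub_const b).fun_pow 2).const_mul (c / 2))).congr_deriv ?_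
    simp only [id, Nat.cast_ofNat]
    ring
  have hGd : Differentiable ℝ G := fun t => (hG t).differentiableAt
  have hGab : G a - G b = f a - f b - (f' b * (a - b) + c / 2 * (a - b) ^ 2) := by
    simp only [G]
    ring
  rcases le_total b a with hba | hab
  · have := (convex_Icc b q).mul_sub_le_image_sub_of_le_deriv (C := 0)
      hGd.continuous.continuousOn hGd.differentiableOn
      (fun x hx => ?_) b ⟨le_rfl, hb.2⟩ a ⟨hba, ha.2⟩ hba
    · linarith
    · rw [interior_Icc] at hx
      rw [(hG x).deriv]
      linarith [hf' b hb x ⟨hb.1.trans hx.1.le, hx.2.le⟩ hx.1.le]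
  · have := (convex_Icc p b).image_sub_le_mul_sub_of_deriv_le (C := 0)
      hGd.continuous.continuousOn hGd.differentiableOn
      (fun x hx => ?_) a ⟨ha.1, hab⟩ b ⟨hb.1, le_rfl⟩ hab
    · linarith
    · rw [interior_Icc] at hx
      rw [(hG x).deriv]
      linarith [hf' x ⟨hx.1.le, hx.2.le.trans hb.2⟩ b hb hx.2.le]

def condLogRisk (e t : ℝ) : ℝ := e * logLoss t + (1 - e) * logLoss (-t)

lemma hasDerivAt_condLogRisk (e t : ℝ) : HasDerivAt (condLogRisk e) (sigmoid t - e) t := by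
  refine (((hasDerivAt_logLoss t).const_mul e).fun_add
    (((hasDerivAt_logLoss (-t)).comp t (hasDerivAt_neg t)).const_mul (1 - e))).congr_deriv ?_
  rw [sigmoid_neg]
  ring

lemma condLogRisk_sub_ge {η : ℝ} (hη : η ∈ Ioo (-1 : ℝ) 1) (e : ℝ) {a b : ℝ}
    (ha : |a| ≤ log ((1 + η) / (1 - η))) (hb : |b| ≤ log ((1 + η) / (1 - η))) :
    (sigmoid b - e) * (a - b) + (1 - η ^ 2) / 8 * (a - b) ^ 2
      ≤ condLogRisk e a - condLogRisk e b := by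
  have := mul_sub_add_sq_le_sub_of_deriv_sub_ge (c := (1 - η ^ 2) / 4) (hasDerivAt_condLogRisk e)
    (fun s hs t ht hst => by
      linarith [mul_sub_le_sigmoid_sub hη (abs_le.2 hs) (abs_le.2 ht) hst])
    (abs_le.1 ha) (abs_le.1 hb)
  linarith

lemma sq_logLoss_sub_le {e : ℝ} (he : e ∈ Icc (0 : ℝ) 1) (a b : ℝ) :
    e * (logLoss a - logLoss b) ^ 2 + (1 - e) * (logLoss (-a) - logLoss (-b)) ^ 2
      ≤ (a - b) ^ 2 := by
  have h₁ : (logLoss a - logLoss b) ^ 2 ≤ (a - b) ^ 2 := sq_le_sq.2 (abs_logLoss_sub_le a b)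
  have h₂ : (logLoss (-a) - logLoss (-b)) ^ 2 ≤ (a - b) ^ 2 := by
    have := sq_le_sq.2 (abs_logLoss_sub_le (-a) (-b))
    linarith [show (-a - -b) ^ 2 = (a - b) ^ 2 by ring]
  nlinarith [he.1, he.2]

lemma sq_logLoss_sub_le_of_sigmoid_sub_mul_nonneg {η : ℝ} (hη : η ∈ Ioo (-1 : ℝ) 1)
    {e a b : ℝ} (he : e ∈ Icc (0 : ℝ) 1) (ha : |a| ≤ log ((1 + η) / (1 - η)))
    (hb : |b| ≤ log ((1 + η) / (1 - η))) (hab : 0 ≤ (sigmoid b - e) * (a - b)) :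
    e * (logLoss a - logLoss b) ^ 2 + (1 - e) * (logLoss (-a) - logLoss (-b)) ^ 2
      ≤ 8 / (1 - η ^ 2)
        * (e * (logLoss a - logLoss b) + (1 - e) * (logLoss (-a) - logLoss (-b))) := by
  have hη2 : 0 < 1 - η ^ 2 := by nlinarith [hη.1, hη.2]
  have hgrowth := condLogRisk_sub_ge hη e ha hb
  rw [condLogRisk, condLogRisk] at hgrowth
  rw [div_mul_eq_mul_div, le_div_iff₀ hη2]
  nlinarith [sq_logLoss_sub_le he a b]

/-- `ψ(x, y) = φ(y · compScore η₀ F₀ (η x))`. -/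
def compScore (η₀ F₀ e : ℝ) : ℝ :=
  if η₀ < |2 * e - 1| then F₀ * rsgn (2 * e - 1) else log (e / (1 - e))

lemma measurable_compScore (η₀ F₀ : ℝ) : Measurable (compScore η₀ F₀) := by
  unfold compScore rsgn
  refine .ite (measurableSet_lt measurable_const (by fun_prop)) (measurable_const.mul ?_)
    (by fun_prop)
  exact .ite (measurableSet_le measurable_const (by fun_prop)) measurable_const measurable_const

section Score

variable {η₀ F₀ : ℝ}

lemma abs_compScore_le (hη₀ : η₀ ∈ Ioo (-1 : ℝ) 1)
    (hF₀ : F₀ ∈ Icc (0 : ℝ) (log ((1 + η₀) / (1 - η₀)))) (e : ℝ) :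
    |compScore η₀ F₀ e| ≤ log ((1 + η₀) / (1 - η₀)) := by
  unfold compScore
  split_ifs with h
  · unfold rsgn
    split_ifs <;> simpa [abs_of_nonneg hF₀.1] using hF₀.2
  · push Not at h
    have he : e ∈ Ioo (0 : ℝ) 1 := by
      constructor <;> linarith [abs_le.1 h, hη₀.2]
    rw [abs_le_log_div_iff hη₀, sigmoid_log_div_one_sub he]
    exact h

lemma sigmoid_compScore_sub_mul_nonneg (hη₀ : η₀ ∈ Ioo (-1 : ℝ) 1)
    (hF₀ : F₀ ∈ Icc (0 : ℝ) (log ((1 + η₀) / (1 - η₀)))) {e a : ℝ}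
    (ha : a ∈ Icc (-F₀) F₀) :
    0 ≤ (sigmoid (compScore η₀ F₀ e) - e) * (a - compScore η₀ F₀ e) := by
  have hσ := abs_le.1 ((abs_le_log_div_iff hη₀ _).1 (abs_compScore_le hη₀ hF₀ e))
  unfold compScore rsgn at hσ ⊢
  split_ifs at hσ ⊢ with h h'
  · rw [abs_of_nonneg h'] at h
    rw [mul_one] at hσ ⊢
    apply mul_nonneg_of_nonpos_of_nonpos <;> linarith [ha.2]
  · rw [abs_of_neg (not_le.1 h')] at h
    rw [mul_neg_one] at hσ ⊢
    apply mul_nonneg <;> linarith [ha.1]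
  · push Not at h
    have he : e ∈ Ioo (0 : ℝ) 1 := by
      constructor <;> linarith [abs_le.1 h, hη₀.2]
    rw [sigmoid_log_div_one_sub he, sub_self, zero_mul]

lemma logLoss_mul_mem_Icc (hη₀ : η₀ ∈ Ioo (-1 : ℝ) 1) {y b : ℝ} (hy : y = 1 ∨ y = -1)
    (hb : |b| ≤ log ((1 + η₀) / (1 - η₀))) :
    logLoss (y * b) ∈ Icc (0 : ℝ) (log (2 / (1 - η₀))) := by
  obtain ⟨h1, h2⟩ := hη₀
  have hr : 0 < (1 + η₀) / (1 - η₀) := div_pos (by linarith) (by linarith)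
  have hyb : -log ((1 + η₀) / (1 - η₀)) ≤ y * b := by
    rcases hy with rfl | rfl <;> linarith [abs_le.1 hb]
  refine ⟨logLoss_nonneg _, (logLoss_antitone hyb).trans_eq ?_⟩
  rw [logLoss_neg_log hr]
  congr 1
  field_simp [(by linarith : (1 - η₀) ≠ 0)]
  ring

lemma sq_logLoss_sub_compScore_le (hη₀ : η₀ ∈ Ioo (-1 : ℝ) 1)
    (hF₀ : F₀ ∈ Icc (0 : ℝ) (log ((1 + η₀) / (1 - η₀)))) {e a : ℝ}
    (he : e ∈ Icc (0 : ℝ) 1) (ha : a ∈ Icc (-F₀) F₀) :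
    e * (logLoss a - logLoss (compScore η₀ F₀ e)) ^ 2
        + (1 - e) * (logLoss (-a) - logLoss (-compScore η₀ F₀ e)) ^ 2
      ≤ 8 / (1 - η₀ ^ 2) * (e * (logLoss a - logLoss (compScore η₀ F₀ e))
        + (1 - e) * (logLoss (-a) - logLoss (-compScore η₀ F₀ e))) :=
  sq_logLoss_sub_le_of_sigmoid_sub_mul_nonneg hη₀ he
    (abs_le.2 ⟨by linarith [ha.1, hF₀.2], by linarith [ha.2, hF₀.2]⟩)
    (abs_compScore_le hη₀ hF₀ e) (sigmoid_compScore_sub_mul_nonneg hη₀ hF₀ ha)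

end Score

section Measure

variable {α : Type*} [MeasurableSpace α] {μ : Measure α} {ρ : α → ℝ}

lemma _root_.MeasureTheory.Integrable.mul_of_mem_Icc {g : α → ℝ} (hg : Integrable g μ)
    (hρm : Measurable ρ) (hρ : ∀ x, ρ x ∈ Icc (0 : ℝ) 1) :
    Integrable (fun x => ρ x * g x) μ :=
  hg.bdd_mul (c := 1) hρm.aestronglyMeasurable (ae_of_all _ fun x => by
    rw [Real.norm_eq_abs, abs_le]
    constructor <;> linarith [(hρ x).1, (hρ x).2])

lemma integrable_map_withDensity_prodMk {g : α × ℝ → ℝ} (hρ : ∀ x, ρ x ≤ 1) (y : ℝ)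
    (hg : Integrable (fun x => g (x, y)) μ) :
    Integrable g ((μ.withDensity fun x => ENNReal.ofReal (ρ x)).map fun x => (x, y)) := by
  rw [(measurableEmbedding_prod_mk_right y).integrable_map_iff]
  refine hg.mono_measure ?_
  calc μ.withDensity (fun x => ENNReal.ofReal (ρ x)) ≤ μ.withDensity 1 :=
        withDensity_mono (ae_of_all _ fun x => ENNReal.ofReal_le_one.2 (hρ x))
    _ = μ := withDensity_one

lemma integral_map_withDensity_prodMk (hρm : Measurable ρ) (hρ : ∀ x, 0 ≤ ρ x) (y : ℝ)
    (g : α × ℝ → ℝ) :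
    ∫ z, g z ∂((μ.withDensity fun x => ENNReal.ofReal (ρ x)).map fun x => (x, y))
      = ∫ x, ρ x * g (x, y) ∂μ := by
  rw [(measurableEmbedding_prod_mk_right y).integral_map,
    integral_withDensity_eq_integral_toReal_smul hρm.ennreal_ofReal
      (ae_of_all _ fun _ => ENNReal.ofReal_lt_top)]
  simp only [ENNReal.toReal_ofReal (hρ _), smul_eq_mul]

end Measure

section PeQ

variable {d : ℕ} {Q : Measure (Fin d → ℝ)} {η : (Fin d → ℝ) → ℝ}

lemma integral_PeQ (hηm : Measurable η) (hη01 : ∀ x, η x ∈ Icc (0 : ℝ) 1)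
    {g : (Fin d → ℝ) × ℝ → ℝ} (h₁ : Integrable (fun x => g (x, 1)) Q)
    (h₂ : Integrable (fun x => g (x, -1)) Q) :
    ∫ z, g z ∂PeQ d Q η = ∫ x, (η x * g (x, 1) + (1 - η x) * g (x, -1)) ∂Q := by
  have hη01' : ∀ x, 1 - η x ∈ Icc (0 : ℝ) 1 := fun x => Icc.mem_iff_one_sub_mem.1 (hη01 x)
  rw [PeQ, integral_add_measure (integrable_map_withDensity_prodMk (fun x => (hη01 x).2) 1 h₁)
      (integrable_map_withDensity_prodMk (fun x => (hη01' x).2) (-1) h₂),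
    integral_map_withDensity_prodMk hηm (fun x => (hη01 x).1),
    integral_map_withDensity_prodMk (ρ := fun x => 1 - η x) (measurable_const.sub hηm)
      (fun x => (hη01' x).1),
    integral_add]
  · exact h₁.mul_of_mem_Icc hηm hη01
  · exact h₂.mul_of_mem_Icc (measurable_const.sub hηm) hη01'

lemma ae_mem_cube [IsProbabilityMeasure Q] (hQ : Q (cube d) = 1) : ∀ᵐ x ∂Q, x ∈ cube d := by
  have hcube : MeasurableSet (cube d) := by
    simp only [cube, Set.ofPred_forall]
    exact .iInter fun i => measurableSet_Icc.preimage (measurable_pi_apply i)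
  rw [ae_mem_iff_measure_eq hcube.nullMeasurableSet, measure_univ]
  exact hQ

lemma integral_sq_logLoss_sub_le [IsFiniteMeasure Q] (hηm : Measurable η)
    (hη01 : ∀ x, η x ∈ Icc (0 : ℝ) 1) {f b : (Fin d → ℝ) → ℝ} (hf : Measurable f)
    (hb : Measurable b) {C K : ℝ} (hC : ∀ᵐ x ∂Q, |f x - b x| ≤ C)
    (hK : ∀ᵐ x ∂Q, η x * (logLoss (f x) - logLoss (b x)) ^ 2
        + (1 - η x) * (logLoss (-f x) - logLoss (-b x)) ^ 2
      ≤ K * (η x * (logLoss (f x) - logLoss (b x))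
        + (1 - η x) * (logLoss (-f x) - logLoss (-b x)))) :
    ∫ z, (logLoss (z.2 * f z.1) - logLoss (z.2 * b z.1)) ^ 2 ∂PeQ d Q η
      ≤ K * ∫ z, (logLoss (z.2 * f z.1) - logLoss (z.2 * b z.1)) ∂PeQ d Q η := by
  have hint : ∀ y : ℝ, |y| = 1 → ∀ n : ℕ,
      Integrable (fun x => (logLoss (y * f x) - logLoss (y * b x)) ^ n) Q := by
    intro y hy n
    refine Integrable.of_bound (((measurable_logLoss.comp (hf.const_mul y)).sub
      (measurable_logLoss.comp (hb.const_mul y))).pow_const n).aestronglyMeasurable (C ^ n) ?_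
    filter_upwards [hC] with x hx
    rw [norm_pow, Real.norm_eq_abs]
    gcongr
    calc |logLoss (y * f x) - logLoss (y * b x)| ≤ |y * f x - y * b x| := abs_logLoss_sub_le _ _
      _ = |f x - b x| := by rw [← mul_sub, abs_mul, hy, one_mul]
      _ ≤ C := hx
  have hint₁ : ∀ y : ℝ, |y| = 1 →
      Integrable (fun x => logLoss (y * f x) - logLoss (y * b x)) Q := fun y hy => by
    simpa using hint y hy 1
  have hmix : ∀ {g h : (Fin d → ℝ) → ℝ}, Integrable g Q → Integrable h Q →
      Integrable (fun x => η x * g x + (1 - η x) * h x) Q := fun hg hh =>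
    (hg.mul_of_mem_Icc hηm hη01).add
      (hh.mul_of_mem_Icc (measurable_const.sub hηm) fun x => Icc.mem_iff_one_sub_mem.1 (hη01 x))
  have h₁ : |(1 : ℝ)| = 1 := abs_one
  have h₂ : |(-1 : ℝ)| = 1 := by norm_num
  rw [integral_PeQ hηm hη01 (hint 1 h₁ 2) (hint (-1) h₂ 2),
    integral_PeQ hηm hη01 (hint₁ 1 h₁) (hint₁ (-1) h₂), ← integral_const_mul]
  refine integral_mono_ae (hmix (hint 1 h₁ 2) (hint (-1) h₂ 2))
    ((hmix (hint₁ 1 h₁) (hint₁ (-1) h₂)).const_mul K) ?_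
  filter_upwards [hK] with x hx
  simpa only [one_mul, neg_one_mul] using hx

end PeQ

theorem statement12_general (η₀ F₀ : ℝ) (hη₀ : η₀ ∈ Set.Ioo (0 : ℝ) 1)
    (hF₀ : F₀ ∈ Set.Ioo (0 : ℝ) (Real.log ((1 + η₀) / (1 - η₀))))
    (d : ℕ) (Q : Measure (Fin d → ℝ)) [IsProbabilityMeasure Q]
    (hQ : Q (cube d) = 1)
    (η : (Fin d → ℝ) → ℝ) (hηm : Measurable η) (hη01 : ∀ x, η x ∈ Set.Icc (0 : ℝ) 1)
    (ψ : (Fin d → ℝ) × ℝ → ℝ)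
    (hψ : ∀ (x : Fin d → ℝ) (y : ℝ),
      ψ (x, y) = if η₀ < |2 * η x - 1| then logLoss (y * F₀ * rsgn (2 * η x - 1))
        else logLoss (y * Real.log (η x / (1 - η x)))) :
    (∀ f : (Fin d → ℝ) → ℝ, Measurable f → (∀ x ∈ cube d, f x ∈ Set.Icc (-F₀) F₀) →
      ∫ z, (logLoss (z.2 * f z.1) - ψ z) ^ 2 ∂(PeQ d Q η)
        ≤ 8 / (1 - η₀ ^ 2) * ∫ z, (logLoss (z.2 * f z.1) - ψ z) ∂(PeQ d Q η)) ∧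
    (∀ x ∈ cube d, ∀ y : ℝ, y = 1 ∨ y = -1 →
      ψ (x, y) ∈ Set.Icc (0 : ℝ) (Real.log (2 / (1 - η₀)))) := by
  have hη₀' : η₀ ∈ Ioo (-1 : ℝ) 1 := ⟨by linarith [hη₀.1], hη₀.2⟩
  have hF₀' := Ioo_subset_Icc_self hF₀
  obtain rfl : ψ = fun z => logLoss (z.2 * compScore η₀ F₀ (η z.1)) := by
    funext ⟨x, y⟩
    rw [hψ, compScore]
    split_ifs <;> ring_nf
  refine ⟨fun f hf hfF => ?_,
    fun x _ y hy => logLoss_mul_mem_Icc hη₀' hy (abs_compScore_le hη₀' hF₀' _)⟩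
  have hfF' : ∀ᵐ x ∂Q, f x ∈ Icc (-F₀) F₀ := (ae_mem_cube hQ).mono hfF
  refine integral_sq_logLoss_sub_le hηm hη01 hf ((measurable_compScore η₀ F₀).comp hηm)
    (C := F₀ + log ((1 + η₀) / (1 - η₀))) ?_ ?_
  · filter_upwards [hfF'] with x hx
    exact (abs_sub _ _).trans (add_le_add (abs_le.2 hx) (abs_compScore_le hη₀' hF₀' _))
  · filter_upwards [hfF'] with x hx
    exact sq_logLoss_sub_compScore_le hη₀' hF₀' (hη01 x) hx

/-- Lemma 5.8: properties of the comparison function `ψ` built from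
`F₀ · sgn(2η - 1)`. -/
theorem statement12 (η₀ F₀ : ℝ) (hη₀ : η₀ ∈ Set.Ioo (0 : ℝ) 1)
    (hF₀ : F₀ ∈ Set.Ioo (0 : ℝ) (Real.log ((1 + η₀) / (1 - η₀))))
    (d : ℕ) (hd : 0 < d) (Q : Measure (Fin d → ℝ)) [IsProbabilityMeasure Q]
    (hQ : Q (cube d) = 1)
    (η : (Fin d → ℝ) → ℝ) (hηm : Measurable η) (hη01 : ∀ x, η x ∈ Set.Icc (0 : ℝ) 1)
    (ψ : (Fin d → ℝ) × ℝ → ℝ)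
    (hψ : ∀ (x : Fin d → ℝ) (y : ℝ),
      ψ (x, y) = if η₀ < |2 * η x - 1| then logLoss (y * F₀ * rsgn (2 * η x - 1))
        else logLoss (y * Real.log (η x / (1 - η x)))) :
    (∀ f : (Fin d → ℝ) → ℝ, Measurable f → (∀ x ∈ cube d, f x ∈ Set.Icc (-F₀) F₀) →
      ∫ z, (logLoss (z.2 * f z.1) - ψ z) ^ 2 ∂(PeQ d Q η)
        ≤ 8 / (1 - η₀ ^ 2) * ∫ z, (logLoss (z.2 * f z.1) - ψ z) ∂(PeQ d Q η)) ∧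
    (∀ x ∈ cube d, ∀ y : ℝ, y = 1 ∨ y = -1 →
      ψ (x, y) ∈ Set.Icc (0 : ℝ) (Real.log (2 / (1 - η₀)))) :=
  statement12_general η₀ F₀ hη₀ hF₀ d Q hQ η hηm hη01 ψ hψ

end

end DNNLogistic
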